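/- arXiv:1604.03356 — 6 statements merged into one kernel-verified Lean document; each statement's English description precedes it below -/
import Mathlib

section
/- Let G be a finite tree with maximum degree Δ and let m ≥ 1. Then there exists a coloring c : V → {0, 1, …, ⌈Δ/m⌉} (hence using at most ⌈Δ/m⌉ + 1 colors) such that adjacent vertices receive different colors and, for every vertex v and every color k, at most m neighbors of v receive color k. -/
/-!
Induction on the number of edges, proving the statement for forests and any `D` with
`Δ ≤ m * D`. Remove a leaf `u` with neighbour `v`, colour the rest, and give `u` a colour
`k ≤ D` different from that of `v`. Only the neighbourhood of `v` changes, and the other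
`deg v - 1 ≤ m * D - 1` neighbours of `v` cannot fill all `D` admissible colours `m` times
each, so by pigeonhole some `k` is used at most `m - 1` times among them.
-/

open Finset

theorem Finset.exists_le_ne_card_filter_lt {α : Type*} (s : Finset α) (f : α → ℕ) (a : ℕ)
    {m D : ℕ} (hs : #s < m * D) : ∃ k ≤ D, k ≠ a ∧ #{x ∈ s | f x = k} < m := by
  have ht : D ≤ #((range (D + 1)).erase a) := by
    simpa using pred_card_le_card_erase (s := range (D + 1)) (a := a)
  obtain ⟨k, hk, hlt⟩ := exists_card_fiber_lt_of_card_lt_mul (f := f)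
    (hs.trans_le (by rw [mul_comm]; gcongr))
  obtain ⟨hka, hkD⟩ := mem_erase.mp hk
  exact ⟨k, Nat.lt_succ_iff.mp (mem_range.mp hkD), hka, hlt⟩

namespace SimpleGraph

variable {V : Type*} {G : SimpleGraph V}

theorem IsAcyclic.exists_degree_eq_one [Finite G.edgeSet] [G.LocallyFinite] (hG : G.IsAcyclic)
    {x y : V} (hxy : G.Adj x y) : ∃ u, G.degree u = 1 := by
  have : Nonempty V := ⟨x⟩
  -- an endpoint of a longest path is a leaf
  obtain ⟨u, v, p, hp, hmax⟩ := Walk.exists_isPath_forall_isPath_length_le_length G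
  have hnil : ¬p.Nil := fun h ↦ by
    simpa [h.length_eq_zero] using hmax _ _ _ (Path.singleton hxy).property
  refine ⟨u, degree_eq_one_iff_existsUnique_adj.mpr ⟨_, p.adj_snd hnil, fun w hw ↦ ?_⟩⟩
  refine hG.eq_snd_of_adj_start hp hw (by_contra fun hwp ↦ ?_)
  simpa using hmax _ _ _ (hp.cons hwp (h := hw.symm))

theorem neighborFinset_deleteIncidenceSet_of_ne [Fintype V] [DecidableEq V] [DecidableRel G.Adj]
    {u w : V} (hw : w ≠ u) :
    (G.deleteIncidenceSet u).neighborFinset w = (G.neighborFinset w).erase u := by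
  ext x
  simp [deleteIncidenceSet_adj, hw, and_comm]

variable [Fintype V]

structure IsCollisionFreeColoring (G : SimpleGraph V) [DecidableRel G.Adj] (m D : ℕ)
    (c : V → ℕ) : Prop where
  le_bound : ∀ v, c v ≤ D
  ne_of_adj : ∀ u v, G.Adj u v → c u ≠ c v
  card_filter_neighborFinset_le : ∀ v k, #{u ∈ G.neighborFinset v | c u = k} ≤ m

theorem isCollisionFreeColoring_bot [DecidableRel (⊥ : SimpleGraph V).Adj] (m D : ℕ) :
    (⊥ : SimpleGraph V).IsCollisionFreeColoring m D 0 :=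
  ⟨fun _ ↦ Nat.zero_le _, fun _ _ h ↦ h.elim, fun _ _ ↦ by simp⟩

theorem IsCollisionFreeColoring.update_of_neighborFinset_eq_singleton [DecidableEq V]
    [DecidableRel G.Adj] {m D k : ℕ} {c : V → ℕ} {u v : V}
    (hc : (G.deleteIncidenceSet u).IsCollisionFreeColoring m D c)
    (hu : G.neighborFinset u = {v}) (hkD : k ≤ D) (hkv : k ≠ c v)
    (hk : #{x ∈ (G.deleteIncidenceSet u).neighborFinset v | c x = k} < m) :
    G.IsCollisionFreeColoring m D (Function.update c u k) := by
  have hadj_u : ∀ {x}, G.Adj u x ↔ x = v := by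
    intro x; rw [← mem_neighborFinset, hu, mem_singleton]
  have hvu : v ≠ u := (hadj_u.mpr rfl).ne'
  refine ⟨fun x ↦ ?_, fun x y hxy ↦ ?_, fun w k₀ ↦ ?_⟩
  · rcases eq_or_ne x u with rfl | hx
    · simpa using hkD
    · simpa [hx] using hc.le_bound x
  · rcases eq_or_ne x u with rfl | hx
    · rw [hadj_u.mp hxy]; simpa [hvu] using hkv
    rcases eq_or_ne y u with rfl | hy
    · rw [hadj_u.mp hxy.symm]; simpa [hvu] using hkv.symm
    simpa [hx, hy] using hc.ne_of_adj x y (deleteIncidenceSet_adj.mpr ⟨hxy, hx, hy⟩)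
  · rcases eq_or_ne w u with rfl | hw
    · calc #{x ∈ G.neighborFinset w | Function.update c w k x = k₀}
          ≤ #(G.neighborFinset w) := card_filter_le _ _
        _ ≤ m := by rw [hu, card_singleton]; lia
    have hsub : {x ∈ G.neighborFinset w | Function.update c u k x = k₀} ⊆
        insert u {x ∈ (G.deleteIncidenceSet u).neighborFinset w | c x = k₀} := by
      intro x
      rcases eq_or_ne x u with rfl | hx
      · simp
      · simp [neighborFinset_deleteIncidenceSet_of_ne hw, hx]
    by_cases hnew : G.Adj w u ∧ k = k₀
    · obtain ⟨hwu, rfl⟩ := hnew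
      obtain rfl : w = v := hadj_u.mp hwu.symm
      calc _ ≤ _ := card_le_card hsub
        _ ≤ _ := card_insert_le _ _
        _ ≤ m := hk
    · calc _ ≤ #{x ∈ (G.deleteIncidenceSet u).neighborFinset w | c x = k₀} := by
            refine card_le_card fun x hx ↦ ?_
            rcases mem_insert.mp (hsub hx) with rfl | hx'
            · simp_all
            · exact hx'
        _ ≤ m := hc.card_filter_neighborFinset_le w k₀

theorem IsAcyclic.exists_isCollisionFreeColoring [DecidableRel G.Adj] (hG : G.IsAcyclic)
    {m D : ℕ} (hΔ : G.maxDegree ≤ m * D) : ∃ c, G.IsCollisionFreeColoring m D c := by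
  classical
  induction hE : #G.edgeFinset using Nat.strong_induction_on generalizing G with
  | _ n ih =>
  rcases eq_or_ne G ⊥ with rfl | hbot
  · exact ⟨0, isCollisionFreeColoring_bot m D⟩
  obtain ⟨x, y, hxy⟩ := ne_bot_iff_exists_adj.mp hbot
  obtain ⟨u, hu⟩ := hG.exists_degree_eq_one hxy
  obtain ⟨v, hNu⟩ := card_eq_one.mp ((card_neighborFinset_eq_degree G u).trans hu)
  have huv : G.Adj u v := by rw [← mem_neighborFinset, hNu]; exact mem_singleton_self v
  have hn : 0 < n := hE ▸ card_pos.mpr ⟨s(u, v), by simpa using huv⟩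
  obtain ⟨c, hc⟩ := ih _ (by rw [← hE, card_edgeFinset_deleteIncidenceSet, hu]; lia)
    (hG.anti (G.deleteIncidenceSet_le u))
    ((maxDegree_mono (G.deleteIncidenceSet_le u)).trans hΔ) rfl
  have hs : #((G.deleteIncidenceSet u).neighborFinset v) < m * D := by
    rw [neighborFinset_deleteIncidenceSet_of_ne huv.ne', card_erase_of_mem
      (by simpa using huv.symm), card_neighborFinset_eq_degree]
    have := G.degree_le_maxDegree v
    have := G.degree_pos_iff_exists_adj v |>.mpr ⟨u, huv.symm⟩
    lia
  obtain ⟨k, hkD, hkv, hk⟩ := exists_le_ne_card_filter_lt _ c (c v) hs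
  exact ⟨_, hc.update_of_neighborFinset_eq_singleton hNu hkD hkv hk⟩

end SimpleGraph

theorem stmt_3_general {V : Type*} [Fintype V] (G : SimpleGraph V)
    [DecidableRel G.Adj] (hT : G.IsTree) (m : ℕ) (hm : 1 ≤ m) :
    ∃ c : V → ℕ,
      (∀ v, c v ≤ (G.maxDegree + m - 1) / m) ∧
      (∀ u v, G.Adj u v → c u ≠ c v) ∧
      (∀ v k, ((G.neighborFinset v).filter (fun u => c u = k)).card ≤ m) := by
  have hΔ : G.maxDegree ≤ m * ((G.maxDegree + m - 1) / m) := by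
    have := Nat.lt_mul_div_succ (G.maxDegree + m - 1) hm
    lia
  obtain ⟨c, hc⟩ := hT.isAcyclic.exists_isCollisionFreeColoring hΔ
  exact ⟨c, hc.le_bound, hc.ne_of_adj, hc.card_filter_neighborFinset_le⟩

/-- Every finite tree with maximum degree Δ admits a conflict-free,
m-collision-free coloring with colors in {0, 1, …, ⌈Δ/m⌉}, hence using at most
⌈Δ/m⌉ + 1 colors. (For naturals with m ≥ 1, ⌈Δ/m⌉ = (Δ + m - 1) / m.) -/
theorem stmt_3 {V : Type*} [Fintype V] [DecidableEq V] (G : SimpleGraph V)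
    [DecidableRel G.Adj] (hT : G.IsTree) (m : ℕ) (hm : 1 ≤ m) :
    ∃ c : V → ℕ,
      (∀ v, c v ≤ (G.maxDegree + m - 1) / m) ∧
      (∀ u v, G.Adj u v → c u ≠ c v) ∧
      (∀ v k, ((G.neighborFinset v).filter (fun u => c u = k)).card ≤ m) :=
  stmt_3_general G hT m hm
end

section
/- Let G be a finite tree with maximum degree Δ, let m ≥ 1, and set K = ⌈Δ/m⌉ + 1. There exists a conflict-free, m-collision-free multi-coloring of G using at most K distinct colors in total in which at least one vertex receives at least two colors, if and only if there exists a vertex i such that K > max({⌈deg(i)/m⌉} ∪ {⌊deg(j)/m⌋ : j ∈ N(i)}) + 1. -/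
set_option linter.unusedSectionVars false
open Finset SimpleGraph

section Tree
variable {V : Type*} [Fintype V] [DecidableEq V] (G : SimpleGraph V)
  [DecidableRel G.Adj] (hT : G.IsTree) (i : V)

noncomputable def pathTo (v : V) : G.Walk v i :=
  ((hT.isConnected.preconnected v i).some).toPath

lemma pathTo_isPath (v : V) : (pathTo G hT i v).IsPath := (Walk.toPath _).2

include hT in
lemma path_eq {v w : V} (p q : G.Walk v w) (hp : p.IsPath) (hq : q.IsPath) : p = q :=
  congrArg Subtype.val (isAcyclic_iff_path_unique.mp hT.2 ⟨p, hp⟩ ⟨q, hq⟩)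

lemma pathTo_eq (v : V) (p : G.Walk v i) (hp : p.IsPath) : pathTo G hT i v = p :=
  path_eq G hT _ _ (pathTo_isPath G hT i v) hp

noncomputable def depth (v : V) : ℕ := (pathTo G hT i v).length

noncomputable def par (v : V) : V := (pathTo G hT i v).getVert 1

lemma pathTo_self : pathTo G hT i i = Walk.nil :=
  pathTo_eq G hT i i Walk.nil (Walk.IsPath.nil)

lemma depth_self : depth G hT i i = 0 := by
  rw [depth, pathTo_self]; rfl

lemma par_self : par G hT i i = i := by
  rw [par, pathTo_self]; rfl

lemma depth_eq_zero {v : V} (h : depth G hT i v = 0) : v = i :=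
  Walk.eq_of_length_eq_zero h

lemma cons_decomp {v : V} (hv : v ≠ i) :
    ∃ (h : G.Adj v (par G hT i v)),
      pathTo G hT i v = Walk.cons h (pathTo G hT i (par G hT i v)) := by
  have hp := pathTo_isPath G hT i v
  cases hw : pathTo G hT i v with
  | nil => exact absurd rfl hv
  | @cons _ u _ h' q =>
    have hq : q.IsPath := by rw [hw] at hp; exact hp.of_cons
    have hpar : par G hT i v = u := by rw [par, hw, Walk.getVert_cons_succ, Walk.getVert_zero]
    subst hpar
    exact ⟨h', by rw [pathTo_eq G hT i _ q hq]⟩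

lemma par_adj {v : V} (hv : v ≠ i) : G.Adj v (par G hT i v) :=
  (cons_decomp G hT i hv).choose

lemma depth_par {v : V} (hv : v ≠ i) :
    depth G hT i (par G hT i v) + 1 = depth G hT i v := by
  obtain ⟨h, hw⟩ := cons_decomp G hT i hv
  rw [depth, depth, hw, Walk.length_cons]

lemma adj_par {u v : V} (h : G.Adj u v) : par G hT i v = u ∨ par G hT i u = v := by
  by_cases hu : u ∈ (pathTo G hT i v).support
  · left
    have hp := pathTo_isPath G hT i v
    have ht : (pathTo G hT i v).takeUntil u hu = Walk.cons h.symm Walk.nil := by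
      refine path_eq G hT _ _ (hp.takeUntil hu) ?_
      rw [Walk.cons_isPath_iff]
      exact ⟨Walk.IsPath.nil, by simp [h.ne']⟩
    have hsplit := Walk.take_spec (pathTo G hT i v) hu
    rw [ht] at hsplit
    rw [par, ← hsplit, Walk.cons_append, Walk.getVert_cons_succ, Walk.getVert_zero]
  · right
    have hp : (Walk.cons h (pathTo G hT i v)).IsPath :=
      (pathTo_isPath G hT i v).cons hu
    rw [par, pathTo_eq G hT i _ _ hp, Walk.getVert_cons_succ, Walk.getVert_zero]

end Tree


-- ## slot machinery
noncomputable def slot (m : ℕ) (A P : Finset ℕ) (k : ℕ) : ℕ :=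
  if h : k / m < A.card then ((A.orderIsoOfFin rfl) ⟨k / m, h⟩ : ℕ)
  else if h2 : (k - m * A.card) / (m - 1) < P.card then
    ((P.orderIsoOfFin rfl) ⟨(k - m * A.card) / (m - 1), h2⟩ : ℕ)
  else 0

lemma slot_cases {m : ℕ} (hm : 1 ≤ m) {A P : Finset ℕ} {t k : ℕ}
    (ht : t ≤ m * A.card + (m - 1) * P.card) (hk : k < t) :
    (∃ h : k / m < A.card, slot m A P k = ((A.orderIsoOfFin rfl) ⟨k / m, h⟩ : ℕ)) ∨
    (m * A.card ≤ k ∧ 2 ≤ m ∧ ∃ h2 : (k - m * A.card) / (m - 1) < P.card,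
      slot m A P k = ((P.orderIsoOfFin rfl) ⟨(k - m * A.card) / (m - 1), h2⟩ : ℕ)) := by
  by_cases h : k / m < A.card
  · exact Or.inl ⟨h, by rw [slot, dif_pos h]⟩
  · right
    push_neg at h
    have hmA : m * A.card ≤ k := by
      calc m * A.card ≤ m * (k / m) := Nat.mul_le_mul_left m h
        _ = (k / m) * m := Nat.mul_comm _ _
        _ ≤ k := Nat.div_mul_le_self k m
    have hm2 : 2 ≤ m := by
      rcases Nat.lt_or_ge m 2 with h1 | h1
      · exfalso
        have hm1 : m = 1 := by omega
        subst hm1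
        simp only [Nat.div_one] at h
        omega
      · exact h1
    have h2 : (k - m * A.card) / (m - 1) < P.card := by
      rw [Nat.div_lt_iff_lt_mul (by omega : 0 < m - 1)]
      have : P.card * (m - 1) = (m - 1) * P.card := Nat.mul_comm _ _
      omega
    exact ⟨hmA, hm2, h2, by rw [slot, dif_neg (by omega), dif_pos h2]⟩

lemma slot_mem {m : ℕ} (hm : 1 ≤ m) {A P : Finset ℕ} {t k : ℕ}
    (ht : t ≤ m * A.card + (m - 1) * P.card) (hk : k < t) : slot m A P k ∈ A ∪ P := by
  rcases slot_cases hm ht hk with ⟨h, hv⟩ | ⟨_, _, h2, hv⟩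
  · exact Finset.mem_union_left _ (hv ▸ ((A.orderIsoOfFin rfl) ⟨k / m, h⟩).2)
  · exact Finset.mem_union_right _ (hv ▸ ((P.orderIsoOfFin rfl) _).2)

lemma slot_count {m : ℕ} (hm : 1 ≤ m) {A P : Finset ℕ} (hAP : Disjoint A P) {t : ℕ}
    (ht : t ≤ m * A.card + (m - 1) * P.card) (c : ℕ) :
    ((Finset.range t).filter (fun k => slot m A P k = c)).card
      + (if c ∈ P then 1 else 0) ≤ m := by
  by_cases hcP : c ∈ P
  · -- count ≤ m - 1
    have hcA : c ∉ A := fun hcA => (Finset.disjoint_left.1 hAP hcA) hcP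
    rw [if_pos hcP]
    have hb : ∀ k ∈ (Finset.range t).filter (fun k => slot m A P k = c),
        m * A.card ≤ k ∧ 2 ≤ m ∧ ∃ h2 : (k - m * A.card) / (m - 1) < P.card,
          slot m A P k = ((P.orderIsoOfFin rfl) ⟨(k - m * A.card) / (m - 1), h2⟩ : ℕ) := by
      intro k hk
      obtain ⟨hkt, hkc⟩ := Finset.mem_filter.1 hk
      rcases slot_cases hm ht (Finset.mem_range.1 hkt) with ⟨h, hv⟩ | hgood
      · exfalso
        apply hcA
        rw [← hkc, hv]
        exact ((A.orderIsoOfFin rfl) ⟨k / m, h⟩).2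
      · exact hgood
    have hcard : ((Finset.range t).filter (fun k => slot m A P k = c)).card ≤ m - 1 := by
      have := Finset.card_le_card_of_injOn (fun k => (k - m * A.card) % (m - 1))
        (s := (Finset.range t).filter (fun k => slot m A P k = c))
        (t := Finset.range (m - 1)) ?_ ?_
      · simpa using this
      · intro k hk
        obtain ⟨_, hm2, _, _⟩ := hb k hk
        exact Finset.mem_range.2 (Nat.mod_lt _ (by omega))
      · intro k1 hk1 k2 hk2 heq
        obtain ⟨hA1, hm2, h21, hv1⟩ := hb k1 hk1
        obtain ⟨hA2, _, h22, hv2⟩ := hb k2 hk2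
        have hc1 := (Finset.mem_filter.1 hk1).2
        have hc2 := (Finset.mem_filter.1 hk2).2
        have hvv : ((P.orderIsoOfFin rfl) ⟨(k1 - m * A.card) / (m - 1), h21⟩ : ℕ) =
            ((P.orderIsoOfFin rfl) ⟨(k2 - m * A.card) / (m - 1), h22⟩ : ℕ) := by
          rw [← hv1, ← hv2, hc1, hc2]
        have hfin : ((k1 - m * A.card) / (m - 1)) = ((k2 - m * A.card) / (m - 1)) := by
          have := (P.orderIsoOfFin rfl).injective (Subtype.ext hvv)
          exact congrArg Fin.val this
        have e1 := Nat.div_add_mod (k1 - m * A.card) (m - 1)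
        have e2 := Nat.div_add_mod (k2 - m * A.card) (m - 1)
        rw [hfin] at e1
        simp only at heq
        omega
    omega
  · rw [if_neg hcP, Nat.add_zero]
    by_cases hcA : c ∈ A
    · -- branch 1 only
      have hb : ∀ k ∈ (Finset.range t).filter (fun k => slot m A P k = c),
          ∃ h : k / m < A.card,
            slot m A P k = ((A.orderIsoOfFin rfl) ⟨k / m, h⟩ : ℕ) := by
        intro k hk
        obtain ⟨hkt, hkc⟩ := Finset.mem_filter.1 hk
        rcases slot_cases hm ht (Finset.mem_range.1 hkt) with hgood | ⟨_, _, h2, hv⟩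
        · exact hgood
        · exfalso
          apply hcP
          rw [← hkc, hv]
          exact ((P.orderIsoOfFin rfl) _).2
      have := Finset.card_le_card_of_injOn (fun k => k % m)
        (s := (Finset.range t).filter (fun k => slot m A P k = c))
        (t := Finset.range m) ?_ ?_
      · simpa using this
      · intro k hk
        exact Finset.mem_range.2 (Nat.mod_lt _ (by omega))
      · intro k1 hk1 k2 hk2 heq
        obtain ⟨h1, hv1⟩ := hb k1 hk1
        obtain ⟨h2, hv2⟩ := hb k2 hk2
        have hc1 := (Finset.mem_filter.1 hk1).2
        have hc2 := (Finset.mem_filter.1 hk2).2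
        have hvv : ((A.orderIsoOfFin rfl) ⟨k1 / m, h1⟩ : ℕ) =
            ((A.orderIsoOfFin rfl) ⟨k2 / m, h2⟩ : ℕ) := by
          rw [← hv1, ← hv2, hc1, hc2]
        have hfin : k1 / m = k2 / m := by
          have := (A.orderIsoOfFin rfl).injective (Subtype.ext hvv)
          exact congrArg Fin.val this
        have e1 := Nat.div_add_mod k1 m
        have e2 := Nat.div_add_mod k2 m
        rw [hfin] at e1
        simp only at heq
        omega
    · -- filter empty
      have : (Finset.range t).filter (fun k => slot m A P k = c) = ∅ := by
        rw [Finset.filter_eq_empty_iff]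
        intro k hk hkc
        rcases Finset.mem_union.1 (hkc ▸ slot_mem hm ht (Finset.mem_range.1 hk)) with h | h
        · exact hcA h
        · exact hcP h
      rw [this]
      simpa using hm


section Rank
variable {V : Type*} [Fintype V] [DecidableEq V]

noncomputable def vord : V → ℕ := fun v => ((Fintype.equivFin V) v : ℕ)

lemma vord_inj : Function.Injective (vord (V := V)) := fun a b h =>
  (Fintype.equivFin V).injective (Fin.val_injective h)

noncomputable def rnk (s : Finset V) (v : V) : ℕ :=
  (s.filter (fun x => vord x < vord v)).card

lemma rnk_lt {s : Finset V} {v : V} (hv : v ∈ s) : rnk s v < s.card := by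
  have hsub : s.filter (fun x => vord x < vord v) ⊆ s.erase v := by
    intro x hx
    obtain ⟨hxs, hxv⟩ := Finset.mem_filter.1 hx
    exact Finset.mem_erase.2 ⟨fun h => by subst h; exact lt_irrefl _ hxv, hxs⟩
  calc rnk s v ≤ (s.erase v).card := Finset.card_le_card hsub
    _ < s.card := Finset.card_erase_lt_of_mem hv

lemma rnk_injOn {s : Finset V} {v w : V} (hv : v ∈ s) (hw : w ∈ s)
    (h : rnk s v = rnk s w) : v = w := by
  by_contra hne
  have hvw : vord v ≠ vord w := fun he => hne (vord_inj he)
  wlog hlt : vord v < vord w generalizing v w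
  · exact this hw hv h.symm (Ne.symm hne) hvw.symm (by omega)
  have : rnk s v < rnk s w := by
    apply Finset.card_lt_card
    constructor
    · intro x hx
      obtain ⟨hxs, hxv⟩ := Finset.mem_filter.1 hx
      exact Finset.mem_filter.2 ⟨hxs, hxv.trans hlt⟩
    · intro hsub
      have : v ∈ s.filter (fun x => vord x < vord v) := hsub (Finset.mem_filter.2 ⟨hv, hlt⟩)
      exact lt_irrefl _ (Finset.mem_filter.1 this).2
  omega

lemma rnk_count_le (s : Finset V) (φ : ℕ → ℕ) (c : ℕ) :
    (s.filter (fun w => φ (rnk s w) = c)).card ≤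
      ((Finset.range s.card).filter (fun k => φ k = c)).card := by
  apply Finset.card_le_card_of_injOn (fun w => rnk s w)
  · intro w hw
    obtain ⟨hws, hwc⟩ := Finset.mem_filter.1 hw
    exact Finset.mem_filter.2 ⟨Finset.mem_range.2 (rnk_lt hws), hwc⟩
  · intro v hv w hw h
    exact rnk_injOn (Finset.mem_filter.1 hv).1 (Finset.mem_filter.1 hw).1 h

end Rank

section Childs
variable {V : Type*} [Fintype V] [DecidableEq V] (G : SimpleGraph V)
  [DecidableRel G.Adj] (hT : G.IsTree) (i : V)

noncomputable def childs (v : V) : Finset V := (G.neighborFinset v).erase (par G hT i v)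

lemma mem_childs_par {p w : V} (hw : w ∈ childs G hT i p) :
    par G hT i w = p ∧ w ≠ i := by
  obtain ⟨hne, hmem⟩ := Finset.mem_erase.1 hw
  have hadj : G.Adj p w := (SimpleGraph.mem_neighborFinset _ _ _).1 hmem
  have hpw : par G hT i w = p := by
    rcases adj_par G hT i hadj with h | h
    · exact h
    · exact absurd h.symm hne
  refine ⟨hpw, fun h => ?_⟩
  have hpi : p = i := by rw [← hpw, h, par_self]
  rw [hpi, h] at hadj
  exact G.irrefl hadj

lemma childs_i : childs G hT i i = G.neighborFinset i := by
  rw [childs, par_self]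
  exact Finset.erase_eq_of_notMem (fun h =>
    G.irrefl ((SimpleGraph.mem_neighborFinset _ _ _).1 h))

lemma nbhd_eq {p : V} (hp : p ≠ i) :
    G.neighborFinset p = insert (par G hT i p) (childs G hT i p) :=
  (Finset.insert_erase ((SimpleGraph.mem_neighborFinset _ _ _).2 (par_adj G hT i hp))).symm

lemma childs_card {p : V} (hp : p ≠ i) :
    (childs G hT i p).card + 1 = G.degree p := by
  rw [childs, Finset.card_erase_of_mem
    ((SimpleGraph.mem_neighborFinset _ _ _).2 (par_adj G hT i hp))]
  have : 1 ≤ (G.neighborFinset p).card :=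
    Finset.card_pos.2 ⟨_, (SimpleGraph.mem_neighborFinset _ _ _).2 (par_adj G hT i hp)⟩
  rw [SimpleGraph.card_neighborFinset_eq_degree] at this ⊢
  omega

lemma mem_childs {v : V} (hv : v ≠ i) : v ∈ childs G hT i (par G hT i v) := by
  refine Finset.mem_erase.2 ⟨?_, (SimpleGraph.mem_neighborFinset _ _ _).2 (par_adj G hT i hv).symm⟩
  intro heq
  by_cases hp : par G hT i v = i
  · rw [hp, par_self] at heq
    exact hv heq
  · have h1 := depth_par G hT i hv
    have h2 := depth_par G hT i hp
    rw [← heq] at h2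
    omega

end Childs

noncomputable def col {V : Type*} [Fintype V] [DecidableEq V] (G : SimpleGraph V)
    [DecidableRel G.Adj] (hT : G.IsTree) (i : V) (m K : ℕ) (v : V) : ℕ :=
  if hv : v = i then 0
  else if hp : par G hT i v = i then 2 + rnk (childs G hT i i) v / m
  else
    have hd1 : depth G hT i (par G hT i v) < depth G hT i v := by
      have := depth_par G hT i hv
      omega
    have hd2 : depth G hT i (par G hT i (par G hT i v)) < depth G hT i v := by
      have h1' := depth_par G hT i hv
      have h2' := depth_par G hT i hp
      omega
    slot m (((Finset.range K).erase (col G hT i m K (par G hT i v))) \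
        (if par G hT i (par G hT i v) = i then {0, 1}
         else {col G hT i m K (par G hT i (par G hT i v))}))
      (if par G hT i (par G hT i v) = i then {0, 1}
       else {col G hT i m K (par G hT i (par G hT i v))})
      (rnk (childs G hT i (par G hT i v)) v)
termination_by depth G hT i v
decreasing_by
  all_goals omega

noncomputable def colorsF {V : Type*} [Fintype V] [DecidableEq V] (G : SimpleGraph V)
    [DecidableRel G.Adj] (hT : G.IsTree) (i : V) (m K : ℕ) (u : V) : Finset ℕ :=
  if u = i then {0, 1} else {col G hT i m K u}

section ColLemmas
variable {V : Type*} [Fintype V] [DecidableEq V] (G : SimpleGraph V)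
  [DecidableRel G.Adj] (hT : G.IsTree) (i : V) (m K : ℕ)

lemma col_eq_depth1 {v : V} (hv : v ≠ i) (hp : par G hT i v = i) :
    col G hT i m K v = 2 + rnk (childs G hT i i) v / m := by
  rw [col.eq_def, dif_neg hv, dif_pos hp]

lemma col_eq_deep {v : V} (hv : v ≠ i) (hp : par G hT i v ≠ i) :
    col G hT i m K v =
      slot m (((Finset.range K).erase (col G hT i m K (par G hT i v))) \
          colorsF G hT i m K (par G hT i (par G hT i v)))
        (colorsF G hT i m K (par G hT i (par G hT i v)))
        (rnk (childs G hT i (par G hT i v)) v) := by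
  rw [col.eq_def]
  rw [dif_neg hv, dif_neg hp]
  rfl

end ColLemmas

section Verify
variable {V : Type*} [Fintype V] [DecidableEq V] (G : SimpleGraph V)
  [DecidableRel G.Adj] (hT : G.IsTree) (i : V) (m K : ℕ)

lemma card_bound {a : ℕ} (pen : Finset ℕ) (ha : a < K) (hapen : a ∉ pen)
    (hpen : pen ⊆ Finset.range K) {t : ℕ}
    (hcase : (pen.card = 2 ∧ 3 ≤ K ∧ t + 2 ≤ m * (K - 1)) ∨
             (pen.card = 1 ∧ 2 ≤ K ∧ t + 1 ≤ m * (K - 1))) :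
    t ≤ m * (((Finset.range K).erase a) \ pen).card + (m - 1) * pen.card := by
  have hpen' : pen ⊆ (Finset.range K).erase a :=
    fun x hx => Finset.mem_erase.2 ⟨fun he => hapen (he ▸ hx), hpen hx⟩
  have hAcard : (((Finset.range K).erase a) \ pen).card = K - 1 - pen.card := by
    rw [Finset.card_sdiff_of_subset hpen', Finset.card_erase_of_mem (Finset.mem_range.2 ha),
      Finset.card_range]
  rw [hAcard]
  rcases hcase with ⟨h2, hK3, hb⟩ | ⟨h1, hK2, hb⟩
  · rw [h2]
    have he : K - 1 - 2 = K - 3 := by omega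
    rw [he]
    have hmul : m * (K - 1) = m * (K - 3) + m * 2 := by
      rw [← Nat.mul_add]; congr 1; omega
    omega
  · rw [h1]
    have he : K - 1 - 1 = K - 2 := by omega
    rw [he]
    have hmul : m * (K - 1) = m * (K - 2) + m * 1 := by
      rw [← Nat.mul_add]; congr 1; omega
    omega

variable (hm : 1 ≤ m) (hK2 : 2 ≤ K) (hK3 : 1 ≤ G.degree i → 3 ≤ K)
  (hdi : G.degree i ≤ m * (K - 2))
  (hdn : ∀ j : V, G.Adj i j → G.degree j + 1 ≤ m * (K - 1))
  (hD : ∀ v : V, G.degree v ≤ m * (K - 1))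

include hm hK2 hK3 hdi hdn hD in
lemma col_good : ∀ n (v : V), depth G hT i v = n → v ≠ i →
    col G hT i m K v < K ∧ col G hT i m K v ∉ colorsF G hT i m K (par G hT i v) := by
  intro n
  induction n using Nat.strong_induction_on with
  | _ n IH =>
  intro v hdv hv
  have hvchild : v ∈ childs G hT i (par G hT i v) := mem_childs G hT i hv
  by_cases hp : par G hT i v = i
  · have hvi : v ∈ childs G hT i i := by rwa [hp] at hvchild
    have hk : rnk (childs G hT i i) v < (childs G hT i i).card := rnk_lt hvi
    have hdeg : (childs G hT i i).card = G.degree i := by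
      rw [childs_i]
      exact SimpleGraph.card_neighborFinset_eq_degree G i
    have hdi1 : 1 ≤ G.degree i := by omega
    have hK3' := hK3 hdi1
    rw [col_eq_depth1 G hT i m K hv hp]
    constructor
    · have hlt : rnk (childs G hT i i) v / m < K - 2 := by
        rw [Nat.div_lt_iff_lt_mul (by omega : 0 < m)]
        have hcm : (K - 2) * m = m * (K - 2) := Nat.mul_comm _ _
        omega
      omega
    · rw [colorsF, if_pos hp]
      intro hmem
      have h2 : 2 ≤ 2 + rnk (childs G hT i i) v / m := Nat.le_add_right 2 _
      rcases Finset.mem_insert.1 hmem with h | h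
      · rw [h] at h2
        exact absurd h2 (by omega)
      · rw [Finset.mem_singleton] at h
        rw [h] at h2
        exact absurd h2 (by omega)
  · -- deep case
    have hd1 := depth_par G hT i hv
    have hd2 := depth_par G hT i hp
    have hIHp := IH (depth G hT i (par G hT i v)) (by omega) (par G hT i v) rfl hp
    obtain ⟨hcp_lt, hcp_pen⟩ := hIHp
    have hIHpp : par G hT i (par G hT i v) ≠ i →
        col G hT i m K (par G hT i (par G hT i v)) < K :=
      fun hpp => (IH (depth G hT i (par G hT i (par G hT i v))) (by omega)
        (par G hT i (par G hT i v)) rfl hpp).1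
    have hpenK : colorsF G hT i m K (par G hT i (par G hT i v)) ⊆ Finset.range K := by
      rw [colorsF]
      by_cases hpp : par G hT i (par G hT i v) = i
      · rw [if_pos hpp]
        intro x hx
        rcases Finset.mem_insert.1 hx with h | h
        · subst h; exact Finset.mem_range.2 (by omega)
        · rw [Finset.mem_singleton] at h; subst h; exact Finset.mem_range.2 (by omega)
      · rw [if_neg hpp]
        intro x hx
        rw [Finset.mem_singleton] at hx; subst hx
        exact Finset.mem_range.2 (hIHpp hpp)
    have htcard := childs_card G hT i hp
    have hk : rnk (childs G hT i (par G hT i v)) v < (childs G hT i (par G hT i v)).card :=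
      rnk_lt hvchild
    have hcase : ((colorsF G hT i m K (par G hT i (par G hT i v))).card = 2 ∧ 3 ≤ K ∧
          (childs G hT i (par G hT i v)).card + 2 ≤ m * (K - 1)) ∨
        ((colorsF G hT i m K (par G hT i (par G hT i v))).card = 1 ∧ 2 ≤ K ∧
          (childs G hT i (par G hT i v)).card + 1 ≤ m * (K - 1)) := by
      by_cases hpp : par G hT i (par G hT i v) = i
      · left
        have hadjpi : G.Adj (par G hT i v) i := by
          have h' := par_adj G hT i hp
          rwa [hpp] at h'
        have hdegp := hdn (par G hT i v) hadjpi.symm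
        have hdegi : 1 ≤ G.degree i := by
          rw [← SimpleGraph.card_neighborFinset_eq_degree]
          exact Finset.card_pos.2 ⟨par G hT i v, (SimpleGraph.mem_neighborFinset _ _ _).2 hadjpi.symm⟩
        refine ⟨?_, hK3 hdegi, by omega⟩
        rw [colorsF, if_pos hpp]
        rfl
      · right
        have hdegp := hD (par G hT i v)
        refine ⟨?_, hK2, by omega⟩
        rw [colorsF, if_neg hpp]
        exact Finset.card_singleton _
    have hbound := card_bound (m := m) (K := K) (a := col G hT i m K (par G hT i v))
      (colorsF G hT i m K (par G hT i (par G hT i v))) hcp_lt hcp_pen hpenK hcase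
    rw [col_eq_deep G hT i m K hv hp]
    have hmem := slot_mem hm hbound hk
    constructor
    · rcases Finset.mem_union.1 hmem with h | h
      · exact Finset.mem_range.1 (Finset.mem_erase.1 (Finset.mem_sdiff.1 h).1).2
      · exact Finset.mem_range.1 (hpenK h)
    · rw [colorsF, if_neg hp, Finset.mem_singleton]
      intro heq
      rcases Finset.mem_union.1 hmem with h | h
      · exact (Finset.mem_erase.1 (Finset.mem_sdiff.1 h).1).1 heq
      · exact hcp_pen (heq ▸ h)

include hm hK2 hK3 hdi hdn hD in
lemma col_good' (v : V) (hv : v ≠ i) :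
    col G hT i m K v < K ∧ col G hT i m K v ∉ colorsF G hT i m K (par G hT i v) :=
  col_good G hT i m K hm hK2 hK3 hdi hdn hD (depth G hT i v) v rfl hv

include hm hK2 hK3 hdi hdn hD in
lemma conflictF {u w : V} (h : G.Adj u w) :
    colorsF G hT i m K u ∩ colorsF G hT i m K w = ∅ := by
  have key : ∀ u w : V, G.Adj u w → par G hT i w = u →
      colorsF G hT i m K u ∩ colorsF G hT i m K w = ∅ := by
    intro u w hadj hpar
    have hwi : w ≠ i := by
      intro hwi
      subst hwi
      rw [par_self] at hpar
      exact hadj.ne (hpar.symm)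
    have hgood := (col_good' G hT i m K hm hK2 hK3 hdi hdn hD w hwi).2
    rw [hpar] at hgood
    have : colorsF G hT i m K w = {col G hT i m K w} := by rw [colorsF, if_neg hwi]
    rw [this, Finset.inter_comm]
    exact Finset.singleton_inter_of_notMem hgood
  rcases adj_par G hT i h with hp | hp
  · exact key u w h hp
  · rw [Finset.inter_comm]
    exact key w u h.symm hp

include hm hK2 hK3 hdi hdn hD in
lemma collisionF (u : V) (c : ℕ) :
    ((G.neighborFinset u).filter (fun w => c ∈ colorsF G hT i m K w)).card ≤ m := by
  have hchildcol : ∀ p : V, ∀ w ∈ childs G hT i p, colorsF G hT i m K w = {col G hT i m K w} := by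
    intro p w hw
    rw [colorsF, if_neg (mem_childs_par G hT i hw).2]
  by_cases hu : u = i
  · rw [hu, ← childs_i G hT]
    have hfc : ((childs G hT i i).filter (fun w => c ∈ colorsF G hT i m K w)).card =
        ((childs G hT i i).filter
          (fun w => 2 + rnk (childs G hT i i) w / m = c)).card := by
      apply Finset.card_bij (fun w _ => w)
      · intro w hw
        obtain ⟨hws, hwc⟩ := Finset.mem_filter.1 hw
        refine Finset.mem_filter.2 ⟨hws, ?_⟩
        obtain ⟨hpar, hwi⟩ := mem_childs_par G hT i hws
        rw [hchildcol _ _ hws, Finset.mem_singleton] at hwc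
        rw [← col_eq_depth1 G hT i m K hwi hpar, hwc]
      · intro a ha b hb hab
        exact hab
      · intro w hw
        obtain ⟨hws, hwc⟩ := Finset.mem_filter.1 hw
        refine ⟨w, Finset.mem_filter.2 ⟨hws, ?_⟩, rfl⟩
        obtain ⟨hpar, hwi⟩ := mem_childs_par G hT i hws
        rw [hchildcol _ _ hws, Finset.mem_singleton,
          col_eq_depth1 G hT i m K hwi hpar, hwc]
    rw [hfc]
    calc ((childs G hT i i).filter (fun w => 2 + rnk (childs G hT i i) w / m = c)).card
        ≤ ((Finset.range (childs G hT i i).card).filter (fun k => 2 + k / m = c)).card :=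
          rnk_count_le _ (fun k => 2 + k / m) c
      _ ≤ (Finset.range m).card := by
          apply Finset.card_le_card_of_injOn (fun k => k % m)
          · intro k _
            exact Finset.mem_range.2 (Nat.mod_lt _ (by omega))
          · intro k1 hk1 k2 hk2 heq
            have h1 := (Finset.mem_filter.1 hk1).2
            have h2 := (Finset.mem_filter.1 hk2).2
            have hdiv : k1 / m = k2 / m := by omega
            have e1 := Nat.div_add_mod k1 m
            have e2 := Nat.div_add_mod k2 m
            rw [hdiv] at e1
            simp only at heq
            omega
      _ = m := Finset.card_range m
  · -- u ≠ i
    have hd1 := depth_par G hT i hu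
    rw [nbhd_eq G hT i hu, Finset.filter_insert]
    have hchild : ((childs G hT i u).filter (fun w => c ∈ colorsF G hT i m K w)).card +
        (if c ∈ colorsF G hT i m K (par G hT i u) then 1 else 0) ≤ m := by
      have hgu := col_good' G hT i m K hm hK2 hK3 hdi hdn hD u hu
      have hpenK : colorsF G hT i m K (par G hT i u) ⊆ Finset.range K := by
        rw [colorsF]
        by_cases hpp : par G hT i u = i
        · rw [if_pos hpp]
          intro x hx
          rcases Finset.mem_insert.1 hx with h | h
          · subst h; exact Finset.mem_range.2 (by omega)
          · rw [Finset.mem_singleton] at h; subst h; exact Finset.mem_range.2 (by omega)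
        · rw [if_neg hpp]
          intro x hx
          rw [Finset.mem_singleton] at hx; subst hx
          exact Finset.mem_range.2 (col_good' G hT i m K hm hK2 hK3 hdi hdn hD _ hpp).1
      have htcard := childs_card G hT i hu
      have hcase : ((colorsF G hT i m K (par G hT i u)).card = 2 ∧ 3 ≤ K ∧
            (childs G hT i u).card + 2 ≤ m * (K - 1)) ∨
          ((colorsF G hT i m K (par G hT i u)).card = 1 ∧ 2 ≤ K ∧
            (childs G hT i u).card + 1 ≤ m * (K - 1)) := by
        by_cases hpp : par G hT i u = i
        · left
          have hadjpi : G.Adj u i := by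
            have h' := par_adj G hT i hu
            rwa [hpp] at h'
          have hdegp := hdn u hadjpi.symm
          have hdegi : 1 ≤ G.degree i := by
            rw [← SimpleGraph.card_neighborFinset_eq_degree]
            exact Finset.card_pos.2 ⟨u, (SimpleGraph.mem_neighborFinset _ _ _).2 hadjpi.symm⟩
          refine ⟨?_, hK3 hdegi, by omega⟩
          rw [colorsF, if_pos hpp]; rfl
        · right
          have hdegp := hD u
          refine ⟨?_, hK2, by omega⟩
          rw [colorsF, if_neg hpp]
          exact Finset.card_singleton _
      have hbound := card_bound (m := m) (K := K) (a := col G hT i m K u)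
        (colorsF G hT i m K (par G hT i u)) hgu.1 hgu.2 hpenK hcase
      have hfc : ((childs G hT i u).filter (fun w => c ∈ colorsF G hT i m K w)).card =
          ((childs G hT i u).filter (fun w =>
            slot m (((Finset.range K).erase (col G hT i m K u)) \
                colorsF G hT i m K (par G hT i u))
              (colorsF G hT i m K (par G hT i u)) (rnk (childs G hT i u) w) = c)).card := by
        apply Finset.card_bij (fun w _ => w)
        · intro w hw
          obtain ⟨hws, hwc⟩ := Finset.mem_filter.1 hw
          obtain ⟨hpar, hwi⟩ := mem_childs_par G hT i hws
          rw [hchildcol _ _ hws, Finset.mem_singleton] at hwc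
          refine Finset.mem_filter.2 ⟨hws, ?_⟩
          rw [hwc, col_eq_deep G hT i m K hwi (by rw [hpar]; exact hu), hpar]
        · intro a ha b hb hab
          exact hab
        · intro w hw
          obtain ⟨hws, hwc⟩ := Finset.mem_filter.1 hw
          obtain ⟨hpar, hwi⟩ := mem_childs_par G hT i hws
          refine ⟨w, Finset.mem_filter.2 ⟨hws, ?_⟩, rfl⟩
          rw [hchildcol _ _ hws, Finset.mem_singleton,
            col_eq_deep G hT i m K hwi (by rw [hpar]; exact hu), hpar]
          exact hwc.symm
      rw [hfc]
      have hcnt := rnk_count_le (childs G hT i u) (fun k =>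
        slot m (((Finset.range K).erase (col G hT i m K u)) \
            colorsF G hT i m K (par G hT i u))
          (colorsF G hT i m K (par G hT i u)) k) c
      have hsc := slot_count hm (Finset.sdiff_disjoint) hbound c
      omega
    by_cases hpc : c ∈ colorsF G hT i m K (par G hT i u)
    · rw [if_pos hpc]
      have := Finset.card_insert_le (par G hT i u)
        ((childs G hT i u).filter (fun w => c ∈ colorsF G hT i m K w))
      rw [if_pos hpc] at hchild
      omega
    · rw [if_neg hpc]
      rw [if_neg hpc] at hchild
      omega

end Verify


private lemma sum_card_eq' {α β : Type*} [DecidableEq α] [DecidableEq β]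
    (s : Finset α) (u : Finset β) (f : α → Finset β) (h : ∀ a ∈ s, f a ⊆ u) :
    ∑ a ∈ s, (f a).card = ∑ b ∈ u, (s.filter (fun a => b ∈ f a)).card := by
  have h1 : ∀ a ∈ s, (f a).card = ∑ b ∈ u, if b ∈ f a then 1 else 0 := by
    intro a ha
    rw [← Finset.card_filter, Finset.filter_mem_eq_inter, Finset.inter_eq_right.2 (h a ha)]
  rw [Finset.sum_congr rfl h1, Finset.sum_comm]
  exact Finset.sum_congr rfl fun b _ => (Finset.card_filter _ _).symm

theorem fwd {V : Type*} [Fintype V] [DecidableEq V] (G : SimpleGraph V)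
    [DecidableRel G.Adj] (m : ℕ) (hm : 1 ≤ m) (K : ℕ)
    (colors : V → Finset ℕ)
    (hne : ∀ u, (colors u).Nonempty)
    (hcf : ∀ u w, G.Adj u w → colors u ∩ colors w = ∅)
    (hcol : ∀ u c, ((G.neighborFinset u).filter (fun w => c ∈ colors w)).card ≤ m)
    (htot : (Finset.univ.biUnion colors).card ≤ K)
    (i : V) (hi : 2 ≤ (colors i).card) :
    ((insert ((G.degree i + m - 1) / m)
        ((G.neighborFinset i).image (fun j => G.degree j / m))).max'
      (Finset.insert_nonempty _ _)) + 1 < K := by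
  set T := Finset.univ.biUnion colors with hT
  have hsubT : ∀ v : V, colors v ⊆ T := fun v c hc =>
    Finset.mem_biUnion.2 ⟨v, Finset.mem_univ v, hc⟩
  have hKT : 2 ≤ T.card := le_trans hi (Finset.card_le_card (hsubT i))
  have hK2 : 2 ≤ K := le_trans hKT htot
  -- bound on degree of i
  have hdi : G.degree i ≤ m * (K - 2) := by
    have hsub : G.neighborFinset i ⊆
        (T \ colors i).biUnion (fun c => (G.neighborFinset i).filter (fun w => c ∈ colors w)) := by
      intro w hw
      obtain ⟨c, hc⟩ := hne w
      have hadj : G.Adj i w := by rwa [← SimpleGraph.mem_neighborFinset]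
      have hcne : c ∉ colors i := fun hci =>
        Finset.notMem_empty c (hcf i w hadj ▸ Finset.mem_inter.2 ⟨hci, hc⟩)
      exact Finset.mem_biUnion.2 ⟨c, Finset.mem_sdiff.2 ⟨hsubT w hc, hcne⟩,
        Finset.mem_filter.2 ⟨hw, hc⟩⟩
    have hcard : (T \ colors i).card ≤ K - 2 := by
      rw [Finset.card_sdiff_of_subset (hsubT i)]
      omega
    calc G.degree i = (G.neighborFinset i).card := rfl
      _ ≤ _ := Finset.card_le_card hsub
      _ ≤ ∑ c ∈ T \ colors i, ((G.neighborFinset i).filter (fun w => c ∈ colors w)).card :=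
          Finset.card_biUnion_le
      _ ≤ ∑ _c ∈ T \ colors i, m := Finset.sum_le_sum fun c _ => hcol i c
      _ = (T \ colors i).card * m := by rw [Finset.sum_const, smul_eq_mul]
      _ ≤ (K - 2) * m := Nat.mul_le_mul_right m hcard
      _ = m * (K - 2) := Nat.mul_comm _ _
  -- bound on degrees of neighbors
  have hdj : ∀ j ∈ G.neighborFinset i, G.degree j + 1 ≤ m * (K - 1) := by
    intro j hj
    have hij : i ∈ G.neighborFinset j := by
      rw [SimpleGraph.mem_neighborFinset] at hj ⊢; exact hj.symm
    have hsubj : ∀ w ∈ G.neighborFinset j, colors w ⊆ T \ colors j := by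
      intro w hw c hc
      have hadj : G.Adj j w := by rwa [← SimpleGraph.mem_neighborFinset]
      have : c ∉ colors j := fun hcj =>
        Finset.notMem_empty c (hcf j w hadj ▸ Finset.mem_inter.2 ⟨hcj, hc⟩)
      exact Finset.mem_sdiff.2 ⟨hsubT w hc, this⟩
    have hup : ∑ w ∈ G.neighborFinset j, (colors w).card ≤ (K - 1) * m := by
      rw [sum_card_eq' _ (T \ colors j) colors hsubj]
      calc ∑ c ∈ T \ colors j, ((G.neighborFinset j).filter (fun w => c ∈ colors w)).card
          ≤ ∑ _c ∈ T \ colors j, m := Finset.sum_le_sum fun c _ => hcol j c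
        _ = (T \ colors j).card * m := by rw [Finset.sum_const, smul_eq_mul]
        _ ≤ (K - 1) * m := by
            refine Nat.mul_le_mul_right m ?_
            rw [Finset.card_sdiff_of_subset ?_]
            · have := (hne j).card_pos
              omega
            · exact hsubT j
    have hlow : G.degree j + 1 ≤ ∑ w ∈ G.neighborFinset j, (colors w).card := by
      rw [← Finset.sum_erase_add _ _ hij]
      have h1 : ((G.neighborFinset j).erase i).card ≤
          ∑ w ∈ (G.neighborFinset j).erase i, (colors w).card :=
        Finset.card_nsmul_le_sum _ _ 1 (fun w _ => (hne w).card_pos) |>.trans_eq' (by simp)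
      have h2 : ((G.neighborFinset j).erase i).card = G.degree j - 1 := by
        rw [Finset.card_erase_of_mem hij]; rfl
      have : 1 ≤ G.degree j := by
        rw [← SimpleGraph.card_neighborFinset_eq_degree]
        exact Finset.card_pos.2 ⟨i, hij⟩
      omega
    calc G.degree j + 1 ≤ _ := hlow
      _ ≤ (K - 1) * m := hup
      _ = m * (K - 1) := Nat.mul_comm _ _
  -- assemble
  have hmax : ((insert ((G.degree i + m - 1) / m)
        ((G.neighborFinset i).image (fun j => G.degree j / m))).max'
      (Finset.insert_nonempty _ _)) < K - 1 := by
    rw [Finset.max'_lt_iff]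
    intro b hb
    rcases Finset.mem_insert.1 hb with hb | hb
    · subst hb
      rw [Nat.div_lt_iff_lt_mul (by omega : 0 < m)]
      have h2 : (K - 1) * m = (K - 2) * m + m := by
        have : K - 1 = (K - 2) + 1 := by omega
        rw [this, Nat.add_mul, one_mul]
      rw [Nat.mul_comm] at hdi
      omega
    · obtain ⟨j, hj, rfl⟩ := Finset.mem_image.1 hb
      rw [Nat.div_lt_iff_lt_mul (by omega : 0 < m)]
      have := hdj j hj
      rw [Nat.mul_comm] at this
      omega
  omega

/-- For a finite tree with maximum degree Δ, m ≥ 1 and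
K = ⌈Δ/m⌉ + 1, there exists a conflict-free, m-collision-free multi-coloring
using at most K colors in total in which some vertex receives at least two
colors, if and only if some vertex i satisfies
K > max({⌈deg(i)/m⌉} ∪ {⌊deg(j)/m⌋ : j ∈ N(i)}) + 1.
(For naturals with m ≥ 1, ⌈d/m⌉ = (d + m - 1) / m and ⌊d/m⌋ = d / m.) -/
theorem stmt_5 {V : Type*} [Fintype V] [DecidableEq V] (G : SimpleGraph V)
    [DecidableRel G.Adj] (hT : G.IsTree) (m : ℕ) (hm : 1 ≤ m)
    (K : ℕ) (hK : K = (G.maxDegree + m - 1) / m + 1) :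
    (∃ colors : V → Finset ℕ,
        (∀ u, (colors u).Nonempty) ∧
        (∀ u w, G.Adj u w → colors u ∩ colors w = ∅) ∧
        (∀ u c, ((G.neighborFinset u).filter (fun w => c ∈ colors w)).card ≤ m) ∧
        (Finset.univ.biUnion colors).card ≤ K ∧
        (∃ i, 2 ≤ (colors i).card)) ↔
    (∃ i : V,
        ((insert ((G.degree i + m - 1) / m)
            ((G.neighborFinset i).image (fun j => G.degree j / m))).max'
          (Finset.insert_nonempty _ _)) + 1 < K) := by
  constructor
  · rintro ⟨colors, hne, hcf, hcol, htot, i, hi⟩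
    exact ⟨i, fwd G m hm K colors hne hcf hcol htot i hi⟩
  · rintro ⟨i, hi⟩
    have hm0 : 0 < m := hm
    have hmax1 : (G.degree i + m - 1) / m ≤
        ((insert ((G.degree i + m - 1) / m)
            ((G.neighborFinset i).image (fun j => G.degree j / m))).max'
          (Finset.insert_nonempty _ _)) :=
      Finset.le_max' _ _ (Finset.mem_insert_self _ _)
    have hK2 : 2 ≤ K := by omega
    have hdi : G.degree i ≤ m * (K - 2) := by
      have h2 : (G.degree i + m - 1) / m < K - 1 := by omega
      rw [Nat.div_lt_iff_lt_mul hm0] at h2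
      have h3 : (K - 1) * m = (K - 2) * m + m := by
        have e : K - 1 = (K - 2) + 1 := by omega
        rw [e, Nat.add_mul, one_mul]
      have h4 : m * (K - 2) = (K - 2) * m := Nat.mul_comm _ _
      omega
    have hK3 : 1 ≤ G.degree i → 3 ≤ K := by
      intro h
      have h1 : 1 ≤ (G.degree i + m - 1) / m := by
        rw [Nat.one_le_div_iff hm0]
        omega
      omega
    have hdn : ∀ j : V, G.Adj i j → G.degree j + 1 ≤ m * (K - 1) := by
      intro j hadj
      have hj : G.degree j / m ≤
          ((insert ((G.degree i + m - 1) / m)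
              ((G.neighborFinset i).image (fun j => G.degree j / m))).max'
            (Finset.insert_nonempty _ _)) := by
        apply Finset.le_max'
        exact Finset.mem_insert_of_mem (Finset.mem_image.2
          ⟨j, (SimpleGraph.mem_neighborFinset _ _ _).2 hadj, rfl⟩)
      have h2 : G.degree j / m < K - 1 := by omega
      rw [Nat.div_lt_iff_lt_mul hm0] at h2
      have h4 : m * (K - 1) = (K - 1) * m := Nat.mul_comm _ _
      omega
    have hD : ∀ v : V, G.degree v ≤ m * (K - 1) := by
      intro v
      have h5 : (G.maxDegree + m - 1) / m < K := by omega
      rw [Nat.div_lt_iff_lt_mul hm0] at h5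
      have h6 : K * m = (K - 1) * m + m := by
        have e : K = (K - 1) + 1 := by omega
        conv_lhs => rw [e]
        rw [Nat.add_mul, one_mul]
      have h7 := G.degree_le_maxDegree v
      have h4 : m * (K - 1) = (K - 1) * m := Nat.mul_comm _ _
      omega
    have hsub : ∀ v : V, colorsF G hT i m K v ⊆ Finset.range K := by
      intro v
      rw [colorsF]
      by_cases hv : v = i
      · rw [if_pos hv]
        intro x hx
        rcases Finset.mem_insert.1 hx with h | h
        · subst h; exact Finset.mem_range.2 (by omega)
        · rw [Finset.mem_singleton] at h; subst h; exact Finset.mem_range.2 (by omega)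
      · rw [if_neg hv]
        intro x hx
        rw [Finset.mem_singleton] at hx; subst hx
        exact Finset.mem_range.2
          (col_good' G hT i m K hm hK2 hK3 hdi hdn hD v hv).1
    refine ⟨colorsF G hT i m K, ?_, ?_, ?_, ?_, ⟨i, ?_⟩⟩
    · intro u
      rw [colorsF]
      by_cases hu : u = i
      · rw [if_pos hu]; exact Finset.insert_nonempty _ _
      · rw [if_neg hu]; exact Finset.singleton_nonempty _
    · intro u w h
      exact conflictF G hT i m K hm hK2 hK3 hdi hdn hD h
    · intro u c
      exact collisionF G hT i m K hm hK2 hK3 hdi hdn hD u c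
    · calc (Finset.univ.biUnion (colorsF G hT i m K)).card
          ≤ (Finset.range K).card :=
            Finset.card_le_card (Finset.biUnion_subset.2 fun v _ => hsub v)
        _ = K := Finset.card_range K
    · rw [colorsF, if_pos rfl]
      rw [Finset.card_insert_of_notMem (by simp), Finset.card_singleton]
end

section
/- Let G be a finite tree with maximum degree Δ, let m ≥ 1, and set K = ⌈Δ/m⌉ + 1. If there exists a vertex i such that K > max({⌈deg(i)/m⌉} ∪ {⌊deg(j)/m⌋ : j ∈ N(i)}) + 1, then there exists a conflict-free, m-collision-free multi-coloring of G using at most K distinct colors in total in which the vertex i receives at least two colors. -/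
/-!
Root the tree at `i` and colour it top-down: `i` gets `{0, 1}` and every other vertex a single
colour. The children of a vertex `p` coloured `C`, whose own parent is coloured `P`, are spread
over the colours `c < K` using `c` never if `c ∈ C`, at most `m - 1` times if `c ∈ P \ C`, and at
most `m` times otherwise; together with the parent of `p` no colour then occurs more than `m` times
around `p`. Such a spreading exists as soon as `p` has at most `K m - m |C| - |P|` children, and
the three degree bounds `deg i ≤ (K - 2) m`, `deg j ≤ (K - 1) m - 1` for `j ∈ N(i)` and
`deg v ≤ (K - 1) m` are exactly what this requires at the root, at its neighbours and elsewhere.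
-/

open Finset

theorem Finset.exists_mapsTo_card_filter_le {α β : Type*} [DecidableEq β] [Nonempty β]
    (s : Finset α) (t : Finset β) (cap : β → ℕ) (h : #s ≤ ∑ b ∈ t, cap b) :
    ∃ f : α → β, Set.MapsTo f s t ∧ ∀ b, #{a ∈ s | f a = b} ≤ cap b := by
  classical
  induction s using Finset.induction_on generalizing cap with
  | empty => exact ⟨fun _ => Classical.arbitrary β, fun _ hx => absurd hx (notMem_empty _), by simp⟩
  | insert a s ha ih =>
    rw [card_insert_of_notMem ha] at h
    obtain ⟨b₀, hb₀, hpos⟩ : ∃ b ∈ t, 0 < cap b := by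
      by_contra! hzero
      rw [sum_eq_zero fun b hb => Nat.le_zero.1 (hzero b hb)] at h
      omega
    obtain ⟨f, hmaps, hfib⟩ := ih (Function.update cap b₀ (cap b₀ - 1)) (by
      rw [sum_update_of_mem hb₀, sdiff_singleton_eq_erase]
      rw [← add_sum_erase t cap hb₀] at h
      omega)
    have hfa : ∀ x ∈ s, Function.update f a b₀ x = f x := fun x hx =>
      Function.update_of_ne (ne_of_mem_of_not_mem hx ha) _ _
    refine ⟨Function.update f a b₀, ?_, fun b => ?_⟩
    · intro x hx
      obtain rfl | hx := mem_insert.1 hx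
      · simpa using hb₀
      · rw [hfa x hx]; exact hmaps hx
    · rw [filter_insert, filter_congr fun x hx => by rw [hfa x hx], Function.update_self]
      have hfb := hfib b
      by_cases hb : b = b₀
      · subst hb
        rw [Function.update_self] at hfb
        rw [if_pos rfl]
        exact (card_insert_le _ _).trans (by omega)
      · rw [Function.update_of_ne hb] at hfb
        rwa [if_neg (Ne.symm hb)]

def childCapacity (m : ℕ) (C P : Finset ℕ) (c : ℕ) : ℕ :=
  if c ∈ C then 0 else m - if c ∈ P then 1 else 0

lemma mul_le_sum_childCapacity (K m : ℕ) (C P : Finset ℕ) :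
    K * m ≤ ∑ c ∈ range K, childCapacity m C P c + #C * m + #P := by
  have hpoint : ∀ c ∈ range K,
      m ≤ childCapacity m C P c + (if c ∈ C then m else 0) + (if c ∈ P then 1 else 0) := by
    intro c _
    unfold childCapacity
    split_ifs <;> omega
  have hC : ∑ c ∈ range K, (if c ∈ C then m else 0) ≤ #C * m := by
    rw [sum_ite_mem, sum_const, smul_eq_mul]
    exact Nat.mul_le_mul_right _ (card_le_card inter_subset_right)
  have hP : ∑ c ∈ range K, (if c ∈ P then 1 else 0) ≤ #P := by
    rw [sum_ite_mem, sum_const, smul_eq_mul, mul_one]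
    exact card_le_card inter_subset_right
  calc K * m = ∑ c ∈ range K, m := by simp
    _ ≤ ∑ c ∈ range K,
        (childCapacity m C P c + (if c ∈ C then m else 0) + (if c ∈ P then 1 else 0)) :=
      sum_le_sum hpoint
    _ ≤ _ := by rw [sum_add_distrib, sum_add_distrib]; omega

namespace SimpleGraph.IsTree

variable {V : Type*} {G : SimpleGraph V} (hT : G.IsTree) (r : V)

noncomputable def pathToRoot (v : V) : G.Walk v r := (hT.existsUnique_path v r).choose

lemma isPath_pathToRoot (v : V) : (hT.pathToRoot r v).IsPath :=
  (hT.existsUnique_path v r).choose_spec.1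

variable {r} in
lemma eq_pathToRoot {v : V} {p : G.Walk v r} (hp : p.IsPath) : p = hT.pathToRoot r v :=
  (hT.existsUnique_path v r).choose_spec.2 p hp

noncomputable def depth (v : V) : ℕ := (hT.pathToRoot r v).length

noncomputable def parent (v : V) : V := (hT.pathToRoot r v).snd

lemma parent_root : hT.parent r r = r := by
  rw [parent, ← hT.eq_pathToRoot Walk.IsPath.nil]; rfl

variable {r}

lemma adj_parent {v : V} (hv : v ≠ r) : G.Adj v (hT.parent r v) :=
  Walk.adj_snd (Walk.not_nil_of_ne hv)

lemma depth_parent_add_one {v : V} (hv : v ≠ r) :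
    hT.depth r (hT.parent r v) + 1 = hT.depth r v := by
  rw [depth, depth, parent, ← hT.eq_pathToRoot (hT.isPath_pathToRoot r v).tail,
    Walk.length_tail_add_one (Walk.not_nil_of_ne hv)]

lemma parent_eq_or_parent_eq_of_adj {u v : V} (huv : G.Adj u v) :
    hT.parent r u = v ∨ hT.parent r v = u := by
  by_cases hv : v ∈ (hT.pathToRoot r u).support
  · exact Or.inl (hT.isAcyclic.eq_snd_of_adj_start (hT.isPath_pathToRoot r u) huv hv).symm
  · right
    rw [parent, ← hT.eq_pathToRoot ((hT.isPath_pathToRoot r u).cons hv (h := huv.symm))]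
    simp

lemma ne_root_of_adj_parent {u p : V} (hadj : G.Adj u p) (hp : hT.parent r u = p) : u ≠ r := by
  rintro rfl
  rw [parent_root] at hp
  exact hadj.ne hp

lemma depth_parent_le (v : V) : hT.depth r (hT.parent r v) ≤ hT.depth r v := by
  by_cases hv : v = r
  · rw [hv, parent_root]
  · exact (hT.depth_parent_add_one hv).le.trans' (Nat.le_succ _)

lemma parent_parent_ne_self {v : V} (hv : v ≠ r) : hT.parent r (hT.parent r v) ≠ v := by
  intro h
  by_cases hp : hT.parent r v = r
  · rw [hp, parent_root] at h; exact hv h.symm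
  · have := hT.depth_parent_add_one hv
    have := hT.depth_parent_add_one hp
    rw [h] at this
    omega

variable [Fintype V] [DecidableEq V] [DecidableRel G.Adj]

variable (r) in
noncomputable def children (p : V) : Finset V := {u ∈ G.neighborFinset p | hT.parent r u = p}

lemma mem_children {p u : V} : u ∈ hT.children r p ↔ G.Adj p u ∧ hT.parent r u = p := by
  simp [children]

lemma ne_root_of_mem_children {p u : V} (hu : u ∈ hT.children r p) : u ≠ r :=
  hT.ne_root_of_adj_parent (hT.mem_children.1 hu).1.symm (hT.mem_children.1 hu).2

lemma mem_children_parent {v : V} (hv : v ≠ r) : v ∈ hT.children r (hT.parent r v) :=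
  hT.mem_children.2 ⟨(hT.adj_parent hv).symm, rfl⟩

variable (r) in
lemma neighborFinset_root : G.neighborFinset r = hT.children r r := by
  ext u
  refine ⟨fun h => ?_, fun h => (G.mem_neighborFinset _ _).2 (hT.mem_children.1 h).1⟩
  rw [mem_neighborFinset] at h
  refine hT.mem_children.2 ⟨h, ?_⟩
  refine (hT.parent_eq_or_parent_eq_of_adj h.symm).resolve_right fun h' => ?_
  rw [parent_root] at h'
  exact G.irrefl (h' ▸ h)

lemma neighborFinset_eq_insert_parent {v : V} (hv : v ≠ r) :
    G.neighborFinset v = insert (hT.parent r v) (hT.children r v) := by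
  ext u
  rw [mem_insert, mem_children, mem_neighborFinset]
  refine ⟨fun h => ?_, ?_⟩
  · exact (hT.parent_eq_or_parent_eq_of_adj h.symm).symm.imp Eq.symm (⟨h, ·⟩)
  · rintro (rfl | h)
    exacts [hT.adj_parent hv, h.1]

lemma card_children_add_one {v : V} (hv : v ≠ r) :
    #(hT.children r v) + 1 = G.degree v := by
  rw [← card_neighborFinset_eq_degree, hT.neighborFinset_eq_insert_parent hv,
    card_insert_of_notMem fun h => hT.parent_parent_ne_self hv (hT.mem_children.1 h).2]

section Coloring

variable (r) (K m : ℕ)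

def IsChildColoring (p : V) (C P : Finset ℕ) (f : V → ℕ) : Prop :=
  Set.MapsTo f (hT.children r p) (range K) ∧
    ∀ c, #{u ∈ hT.children r p | f u = c} ≤ childCapacity m C P c

-- The inner `if` is `parentColors (parent v)`, unfolded so that the recursion is visible.
noncomputable def topDownColoring (v : V) : Finset ℕ :=
  if hv : v = r then {0, 1} else
    {Classical.epsilon (hT.IsChildColoring r K m (hT.parent r v)
      (topDownColoring (hT.parent r v))
      (if hT.parent r v = r then ∅ else topDownColoring (hT.parent r (hT.parent r v)))) v}
termination_by hT.depth r v
decreasing_by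
  all_goals
    have := hT.depth_parent_add_one hv
    have := hT.depth_parent_le (r := r) (hT.parent r v)
    omega

noncomputable def parentColors (p : V) : Finset ℕ :=
  if p = r then ∅ else hT.topDownColoring r K m (hT.parent r p)

noncomputable def childColor (p : V) : V → ℕ :=
  Classical.epsilon (hT.IsChildColoring r K m p (hT.topDownColoring r K m p)
    (hT.parentColors r K m p))

lemma topDownColoring_root : hT.topDownColoring r K m r = {0, 1} := by
  rw [topDownColoring, dif_pos rfl]

variable {r} in
lemma topDownColoring_of_ne {v : V} (hv : v ≠ r) :
    hT.topDownColoring r K m v = {hT.childColor r K m (hT.parent r v) v} := by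
  rw [topDownColoring, dif_neg hv, childColor, parentColors]

lemma card_topDownColoring (v : V) :
    #(hT.topDownColoring r K m v) = if v = r then 2 else 1 := by
  split_ifs with hv
  · rw [hv, topDownColoring_root]; rfl
  · rw [hT.topDownColoring_of_ne K m hv, card_singleton]

lemma card_parentColors (p : V) :
    #(hT.parentColors r K m p) = if p = r then 0 else if hT.parent r p = r then 2 else 1 := by
  rw [parentColors]
  split_ifs <;> simp_all [card_topDownColoring]

def ChildrenFit : Prop :=
  ∀ p, #(hT.children r p) ≤
    ∑ c ∈ range K, childCapacity m (hT.topDownColoring r K m p) (hT.parentColors r K m p) c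

variable {r K m}

lemma isChildColoring_childColor (hfit : hT.ChildrenFit r K m) (p : V) :
    hT.IsChildColoring r K m p (hT.topDownColoring r K m p) (hT.parentColors r K m p)
      (hT.childColor r K m p) :=
  Classical.epsilon_spec (exists_mapsTo_card_filter_le _ _ _ (hfit p))

lemma topDownColoring_subset_range (hfit : hT.ChildrenFit r K m) (hK : 2 ≤ K) (v : V) :
    hT.topDownColoring r K m v ⊆ range K := by
  by_cases hv : v = r
  · rw [hv, topDownColoring_root]
    intro c hc
    simp only [mem_insert, mem_singleton] at hc
    rw [mem_range]
    omega
  · rw [hT.topDownColoring_of_ne K m hv, singleton_subset_iff]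
    exact (hT.isChildColoring_childColor hfit _).1 (hT.mem_children_parent hv)

lemma filter_children_mem_topDownColoring (p : V) (c : ℕ) :
    {u ∈ hT.children r p | c ∈ hT.topDownColoring r K m u} =
      {u ∈ hT.children r p | hT.childColor r K m p u = c} := by
  refine filter_congr fun u hu => ?_
  rw [hT.topDownColoring_of_ne K m (hT.ne_root_of_mem_children hu), (hT.mem_children.1 hu).2,
    mem_singleton, eq_comm]

lemma disjoint_topDownColoring_parent (hfit : hT.ChildrenFit r K m) {v : V} (hv : v ≠ r) :
    Disjoint (hT.topDownColoring r K m v) (hT.topDownColoring r K m (hT.parent r v)) := by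
  set p := hT.parent r v
  rw [hT.topDownColoring_of_ne K m hv, disjoint_singleton_left]
  intro hc
  have hfiber := (hT.isChildColoring_childColor hfit p).2 (hT.childColor r K m p v)
  rw [childCapacity, if_pos hc, Nat.le_zero, card_eq_zero, filter_eq_empty_iff] at hfiber
  exact hfiber (hT.mem_children_parent hv) rfl

lemma disjoint_topDownColoring_of_adj (hfit : hT.ChildrenFit r K m) {u w : V} (huw : G.Adj u w) :
    Disjoint (hT.topDownColoring r K m u) (hT.topDownColoring r K m w) := by
  rcases hT.parent_eq_or_parent_eq_of_adj (r := r) huw with h | h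
  · rw [← h]
    exact hT.disjoint_topDownColoring_parent hfit (hT.ne_root_of_adj_parent huw h)
  · rw [← h]
    exact (hT.disjoint_topDownColoring_parent hfit (hT.ne_root_of_adj_parent huw.symm h)).symm

lemma card_filter_neighborFinset_le (hfit : hT.ChildrenFit r K m) (hm : 1 ≤ m) (u : V) (c : ℕ) :
    #{w ∈ G.neighborFinset u | c ∈ hT.topDownColoring r K m w} ≤ m := by
  have hchildren := (hT.isChildColoring_childColor hfit u).2 c
  rw [← filter_children_mem_topDownColoring, childCapacity] at hchildren
  by_cases hu : u = r
  · rw [hu] at hchildren ⊢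
    rw [hT.neighborFinset_root r]
    split_ifs at hchildren <;> omega
  · rw [hT.neighborFinset_eq_insert_parent hu, filter_insert]
    rw [parentColors, if_neg hu] at hchildren
    split_ifs at hchildren ⊢ <;> grind [card_insert_le]

lemma childrenFit_of_degree_le (hroot : G.degree r + 2 * m ≤ K * m)
    (hnbr : ∀ v, G.Adj r v → G.degree v + m + 1 ≤ K * m) (hdeg : ∀ v, G.degree v + m ≤ K * m) :
    hT.ChildrenFit r K m := by
  intro p
  have hsum := mul_le_sum_childCapacity K m (hT.topDownColoring r K m p) (hT.parentColors r K m p)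
  rw [card_topDownColoring, card_parentColors] at hsum
  by_cases hp : p = r
  · rw [hp, ← hT.neighborFinset_root, card_neighborFinset_eq_degree]
    simp only [hp, if_true] at hsum
    omega
  · have hcard := hT.card_children_add_one hp
    simp only [hp, if_false] at hsum
    split_ifs at hsum with hpp
    · have := hnbr p (hpp ▸ hT.adj_parent hp).symm
      omega
    · have := hdeg p
      omega

end Coloring

end SimpleGraph.IsTree

/-- "if" direction: For a finite tree with maximum degree Δ, m ≥ 1
and K = ⌈Δ/m⌉ + 1, if a vertex i satisfies
K > max({⌈deg(i)/m⌉} ∪ {⌊deg(j)/m⌋ : j ∈ N(i)}) + 1, then there is a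
conflict-free, m-collision-free multi-coloring using at most K colors in total
in which vertex i receives at least two colors.
(For naturals with m ≥ 1, ⌈d/m⌉ = (d + m - 1) / m and ⌊d/m⌋ = d / m.) -/
theorem stmt_6 {V : Type*} [Fintype V] [DecidableEq V] (G : SimpleGraph V)
    [DecidableRel G.Adj] (hT : G.IsTree) (m : ℕ) (hm : 1 ≤ m)
    (K : ℕ) (hK : K = (G.maxDegree + m - 1) / m + 1)
    (i : V)
    (hi : ((insert ((G.degree i + m - 1) / m)
            ((G.neighborFinset i).image (fun j => G.degree j / m))).max'
          (Finset.insert_nonempty _ _)) + 1 < K) :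
    ∃ colors : V → Finset ℕ,
      (∀ u, (colors u).Nonempty) ∧
      (∀ u w, G.Adj u w → colors u ∩ colors w = ∅) ∧
      (∀ u c, ((G.neighborFinset u).filter (fun w => c ∈ colors w)).card ≤ m) ∧
      (Finset.univ.biUnion colors).card ≤ K ∧
      2 ≤ (colors i).card := by
  have hlt : ∀ x ∈ insert ((G.degree i + m - 1) / m)
      ((G.neighborFinset i).image (fun j => G.degree j / m)), x < K - 1 :=
    fun x hx => by have := le_max' _ x hx; omega
  have hroot : G.degree i + 2 * m ≤ K * m := by
    have := Nat.lt_mul_of_div_lt (hlt _ (mem_insert_self _ _)) hm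
    rw [Nat.sub_one_mul] at this
    omega
  have hnbr : ∀ j, G.Adj i j → G.degree j + m + 1 ≤ K * m := fun j hj => by
    have := Nat.lt_mul_of_div_lt
      (hlt _ (mem_insert_of_mem (mem_image_of_mem _ ((G.mem_neighborFinset _ _).2 hj)))) hm
    rw [Nat.sub_one_mul] at this
    omega
  have hdeg : ∀ v, G.degree v + m ≤ K * m := fun v => by
    have := Nat.lt_mul_of_div_lt (show (G.maxDegree + m - 1) / m < K by omega) hm
    have := G.degree_le_maxDegree v
    omega
  have hK2 : 2 ≤ K := by have := hlt _ (mem_insert_self _ _); omega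
  have hfit := hT.childrenFit_of_degree_le hroot hnbr hdeg
  refine ⟨hT.topDownColoring i K m, fun u => card_pos.1 ?_,
    fun u w huw => disjoint_iff_inter_eq_empty.1 (hT.disjoint_topDownColoring_of_adj hfit huw),
    hT.card_filter_neighborFinset_le hfit hm, ?_, ?_⟩
  · rw [hT.card_topDownColoring]
    split_ifs <;> norm_num
  · calc #(univ.biUnion (hT.topDownColoring i K m)) ≤ #(range K) :=
        card_le_card (biUnion_subset.2 fun v _ => hT.topDownColoring_subset_range hfit hK2 v)
      _ = K := card_range K
  · rw [hT.card_topDownColoring, if_pos rfl]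
end

section
/- Let G be a finite tree with maximum degree Δ, let m ≥ 1, and set K = ⌈Δ/m⌉ + 1. If there exists a conflict-free, m-collision-free multi-coloring of G using at most K distinct colors in total in which some vertex i receives at least two colors, then K > max({⌈deg(i)/m⌉} ∪ {⌊deg(j)/m⌋ : j ∈ N(i)}) + 1 for that vertex i. -/
/-- "only if" direction: For a finite tree with maximum degree Δ,
m ≥ 1 and K = ⌈Δ/m⌉ + 1, if there is a conflict-free, m-collision-free
multi-coloring using at most K colors in total in which a vertex i receives at
least two colors, then K > max({⌈deg(i)/m⌉} ∪ {⌊deg(j)/m⌋ : j ∈ N(i)}) + 1.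
(For naturals with m ≥ 1, ⌈d/m⌉ = (d + m - 1) / m and ⌊d/m⌋ = d / m.) -/
theorem stmt_7 {V : Type*} [Fintype V] [DecidableEq V] (G : SimpleGraph V)
    [DecidableRel G.Adj] (hT : G.IsTree) (m : ℕ) (hm : 1 ≤ m)
    (K : ℕ) (hK : K = (G.maxDegree + m - 1) / m + 1)
    (colors : V → Finset ℕ)
    (hne : ∀ u, (colors u).Nonempty)
    (hconf : ∀ u w, G.Adj u w → colors u ∩ colors w = ∅)
    (hcoll : ∀ u c, ((G.neighborFinset u).filter (fun w => c ∈ colors w)).card ≤ m)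
    (htot : (Finset.univ.biUnion colors).card ≤ K)
    (i : V) (hi : 2 ≤ (colors i).card) :
    ((insert ((G.degree i + m - 1) / m)
        ((G.neighborFinset i).image (fun j => G.degree j / m))).max'
      (Finset.insert_nonempty _ _)) + 1 < K := by
  classical
  set U := Finset.univ.biUnion colors with hU
  have hciU : colors i ⊆ U := Finset.subset_biUnion_of_mem colors (Finset.mem_univ i)
  have hK2 : 2 ≤ K := le_trans hi (le_trans (Finset.card_le_card hciU) htot)
  obtain ⟨k, hk⟩ : ∃ k, K = k + 2 := ⟨K - 2, by omega⟩
  -- general double counting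
  have count : ∀ j : V, ∑ w ∈ G.neighborFinset j, (colors w).card
      ≤ m * (U \ colors j).card := by
    intro j
    have hsub : ∀ w ∈ G.neighborFinset j, colors w ⊆ U \ colors j := by
      intro w hw
      rw [SimpleGraph.mem_neighborFinset] at hw
      refine Finset.subset_sdiff.mpr ⟨Finset.subset_biUnion_of_mem colors (Finset.mem_univ w), ?_⟩
      rw [Finset.disjoint_iff_inter_eq_empty]
      exact hconf w j hw.symm
    have h1 : ∑ w ∈ G.neighborFinset j, (colors w).card
        = ∑ c ∈ U \ colors j, ((G.neighborFinset j).filter (fun w => c ∈ colors w)).card := by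
      have h2 : ∀ w ∈ G.neighborFinset j,
          (colors w).card = ∑ c ∈ U \ colors j, if c ∈ colors w then 1 else 0 := by
        intro w hw
        rw [← Finset.card_filter, Finset.filter_mem_eq_inter,
          Finset.inter_eq_right.mpr (hsub w hw)]
      rw [Finset.sum_congr rfl h2, Finset.sum_comm]
      refine Finset.sum_congr rfl fun c _ => ?_
      rw [Finset.card_filter]
    rw [h1]
    calc ∑ c ∈ U \ colors j, ((G.neighborFinset j).filter (fun w => c ∈ colors w)).card
        ≤ ∑ _c ∈ U \ colors j, m := Finset.sum_le_sum fun c _ => hcoll j c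
      _ = (U \ colors j).card * m := Finset.sum_const m
      _ = m * (U \ colors j).card := Nat.mul_comm _ _
  have lower : ∀ j : V, (G.neighborFinset j).card ≤ ∑ w ∈ G.neighborFinset j, (colors w).card := by
    intro j
    calc (G.neighborFinset j).card = ∑ _w ∈ G.neighborFinset j, 1 := by simp
      _ ≤ _ := Finset.sum_le_sum fun w _ => Nat.one_le_iff_ne_zero.mpr
          (Finset.card_ne_zero_of_mem (hne w).choose_spec)
  -- bound for i
  have hdegi : G.degree i ≤ m * k := by
    have hSi : (U \ colors i).card ≤ k := by
      have := Finset.card_sdiff_of_subset hciU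
      have := Finset.card_le_card hciU
      omega
    calc G.degree i = (G.neighborFinset i).card := (G.card_neighborFinset_eq_degree i).symm
      _ ≤ ∑ w ∈ G.neighborFinset i, (colors w).card := lower i
      _ ≤ m * (U \ colors i).card := count i
      _ ≤ m * k := Nat.mul_le_mul_left m hSi
  -- bound for neighbors
  have hdegj : ∀ j ∈ G.neighborFinset i, G.degree j + 1 ≤ m * (k + 1) := by
    intro j hj
    rw [SimpleGraph.mem_neighborFinset] at hj
    have hiNj : i ∈ G.neighborFinset j := by
      rw [SimpleGraph.mem_neighborFinset]; exact hj.symm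
    have hjU : colors j ⊆ U := Finset.subset_biUnion_of_mem colors (Finset.mem_univ j)
    have hSj : (U \ colors j).card ≤ k + 1 := by
      have := Finset.card_sdiff_of_subset hjU
      have := Finset.card_le_card hjU
      have : 1 ≤ (colors j).card := Finset.card_pos.mpr (hne j)
      omega
    have hlow : G.degree j + 1 ≤ ∑ w ∈ G.neighborFinset j, (colors w).card := by
      rw [← Finset.add_sum_erase _ _ hiNj]
      have h2 : G.degree j = ((G.neighborFinset j).erase i).card + 1 := by
        rw [Finset.card_erase_of_mem hiNj, G.card_neighborFinset_eq_degree]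
        have : 0 < G.degree i ∨ True := Or.inr trivial
        have hd : 1 ≤ G.degree j := by
          rw [← G.card_neighborFinset_eq_degree]
          exact Finset.card_pos.mpr ⟨i, hiNj⟩
        omega
      have h3 : ((G.neighborFinset j).erase i).card
          ≤ ∑ w ∈ (G.neighborFinset j).erase i, (colors w).card := by
        calc ((G.neighborFinset j).erase i).card = ∑ _w ∈ (G.neighborFinset j).erase i, 1 := by simp
          _ ≤ _ := Finset.sum_le_sum fun w _ => Nat.one_le_iff_ne_zero.mpr
              (Finset.card_ne_zero_of_mem (hne w).choose_spec)
      omega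
    calc G.degree j + 1 ≤ ∑ w ∈ G.neighborFinset j, (colors w).card := hlow
      _ ≤ m * (U \ colors j).card := count j
      _ ≤ m * (k + 1) := Nat.mul_le_mul_left m hSj
  -- conclude
  have hmax : (insert ((G.degree i + m - 1) / m)
      ((G.neighborFinset i).image (fun j => G.degree j / m))).max'
      (Finset.insert_nonempty _ _) ≤ k := by
    apply Finset.max'_le
    intro a ha
    rw [Finset.mem_insert, Finset.mem_image] at ha
    rcases ha with rfl | ⟨j, hj, rfl⟩
    · have hlt : G.degree i + m - 1 < m * (k + 1) := by
        rw [Nat.mul_succ]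
        generalize m * k = p at hdegi ⊢
        omega
      exact Nat.lt_succ_iff.mp (Nat.div_lt_of_lt_mul hlt)
    · have hlt : G.degree j < m * (k + 1) := by
        have := hdegj j hj
        omega
      exact Nat.lt_succ_iff.mp (Nat.div_lt_of_lt_mul hlt)
  omega
end

section
/- Let G be a finite simple graph, m ≥ 1, and suppose G carries a conflict-free, m-collision-free multi-coloring using K distinct colors in total. If some vertex i satisfies |colors(i)| ≥ 2, then K > ⌈deg(i)/m⌉ + 1. -/
/-- If a finite simple graph carries a conflict-free,
m-collision-free multi-coloring using K distinct colors in total, and some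
vertex i receives at least two colors, then K > ⌈deg(i)/m⌉ + 1.
(For naturals with m ≥ 1, ⌈d/m⌉ = (d + m - 1) / m.) -/
theorem stmt_8 {V : Type*} [Fintype V] [DecidableEq V] (G : SimpleGraph V)
    [DecidableRel G.Adj] (m : ℕ) (hm : 1 ≤ m)
    (colors : V → Finset ℕ)
    (hne : ∀ u, (colors u).Nonempty)
    (hconf : ∀ u w, G.Adj u w → colors u ∩ colors w = ∅)
    (hcoll : ∀ u c, ((G.neighborFinset u).filter (fun w => c ∈ colors w)).card ≤ m)
    (K : ℕ) (hK : K = (Finset.univ.biUnion colors).card)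
    (i : V) (hi : 2 ≤ (colors i).card) :
    (G.degree i + m - 1) / m + 1 < K := by
  classical
  set A : Finset ℕ := (G.neighborFinset i).biUnion colors with hA
  -- A is disjoint from colors i
  have hdisj : Disjoint A (colors i) := by
    rw [Finset.disjoint_left]
    intro c hcA hci
    rcases Finset.mem_biUnion.mp hcA with ⟨w, hw, hcw⟩
    have hadj : G.Adj i w := (SimpleGraph.mem_neighborFinset G i w).mp hw
    have := hconf i w hadj
    have : c ∈ colors i ∩ colors w := Finset.mem_inter.mpr ⟨hci, hcw⟩
    rw [hconf i w hadj] at this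
    exact absurd this (Finset.notMem_empty c)
  -- neighbors are covered by filters over colors in A
  have hcover : G.neighborFinset i ⊆
      A.biUnion (fun c => (G.neighborFinset i).filter (fun w => c ∈ colors w)) := by
    intro w hw
    rcases hne w with ⟨c, hc⟩
    exact Finset.mem_biUnion.mpr ⟨c, Finset.mem_biUnion.mpr ⟨w, hw, hc⟩,
      Finset.mem_filter.mpr ⟨hw, hc⟩⟩
  have hdeg : G.degree i ≤ A.card * m := by
    calc G.degree i = (G.neighborFinset i).card := (G.card_neighborFinset_eq_degree i).symm
      _ ≤ (A.biUnion (fun c => (G.neighborFinset i).filter (fun w => c ∈ colors w))).card :=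
          Finset.card_le_card hcover
      _ ≤ ∑ c ∈ A, ((G.neighborFinset i).filter (fun w => c ∈ colors w)).card :=
          Finset.card_biUnion_le
      _ ≤ ∑ _c ∈ A, m := Finset.sum_le_sum (fun c _ => hcoll i c)
      _ = A.card * m := by rw [Finset.sum_const, smul_eq_mul]
  -- ceil bound
  have hceil : (G.degree i + m - 1) / m ≤ A.card := by
    have h1 : G.degree i + m - 1 ≤ A.card * m + (m - 1) := by omega
    calc (G.degree i + m - 1) / m ≤ (A.card * m + (m - 1)) / m := Nat.div_le_div_right h1
      _ = A.card := by
          rw [Nat.add_comm, Nat.add_mul_div_right _ _ (by omega : 0 < m),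
            Nat.div_eq_of_lt (by omega), Nat.zero_add]
  -- total count
  have hsub : A ∪ colors i ⊆ Finset.univ.biUnion colors := by
    intro c hc
    rcases Finset.mem_union.mp hc with hc | hc
    · rcases Finset.mem_biUnion.mp hc with ⟨w, _, hcw⟩
      exact Finset.mem_biUnion.mpr ⟨w, Finset.mem_univ w, hcw⟩
    · exact Finset.mem_biUnion.mpr ⟨i, Finset.mem_univ i, hc⟩
  have hKge : A.card + (colors i).card ≤ K := by
    rw [hK, ← Finset.card_union_of_disjoint hdisj]
    exact Finset.card_le_card hsub
  omega
end

section
/- Let G be a finite simple graph, m ≥ 1, and suppose G carries a conflict-free, m-collision-free multi-coloring using K distinct colors in total. If some vertex i satisfies |colors(i)| ≥ 2, then for every neighbor j of i one has (K − 1)·m ≥ deg(j) + 1, and consequently K > ⌊deg(j)/m⌋ + 1. -/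
/-- If a finite simple graph carries a conflict-free,
m-collision-free multi-coloring using K distinct colors in total, and some
vertex i receives at least two colors, then every neighbor j of i satisfies
(K - 1)·m ≥ deg(j) + 1, and consequently K > ⌊deg(j)/m⌋ + 1.
(For naturals, ⌊d/m⌋ = d / m.) -/
theorem stmt_9 {V : Type*} [Fintype V] [DecidableEq V] (G : SimpleGraph V)
    [DecidableRel G.Adj] (m : ℕ) (hm : 1 ≤ m)
    (colors : V → Finset ℕ)
    (hne : ∀ u, (colors u).Nonempty)
    (hconf : ∀ u w, G.Adj u w → colors u ∩ colors w = ∅)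
    (hcoll : ∀ u c, ((G.neighborFinset u).filter (fun w => c ∈ colors w)).card ≤ m)
    (K : ℕ) (hK : K = (Finset.univ.biUnion colors).card)
    (i : V) (hi : 2 ≤ (colors i).card) :
    ∀ j, G.Adj i j → G.degree j + 1 ≤ (K - 1) * m ∧ G.degree j / m + 1 < K := by
  intro j hij
  set S := G.neighborFinset j with hS
  set U := Finset.univ.biUnion colors with hU
  set T := U \ colors j with hT
  have hiS : i ∈ S := by
    rw [hS, SimpleGraph.mem_neighborFinset]
    exact hij.symm
  have hsub : ∀ w ∈ S, colors w ⊆ T := by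
    intro w hw c hc
    have hadj : G.Adj j w := by rwa [hS, SimpleGraph.mem_neighborFinset] at hw
    refine Finset.mem_sdiff.mpr ⟨Finset.mem_biUnion.mpr ⟨w, Finset.mem_univ _, hc⟩, ?_⟩
    intro hcj
    have hmem : c ∈ colors j ∩ colors w := Finset.mem_inter.mpr ⟨hcj, hc⟩
    rw [hconf j w hadj] at hmem
    exact absurd hmem (Finset.notMem_empty c)
  -- main double counting
  have hsum : ∑ w ∈ S, (colors w).card = ∑ c ∈ T, (S.filter (fun w => c ∈ colors w)).card := by
    have : ∀ w ∈ S, (colors w).card = ∑ c ∈ T, (if c ∈ colors w then 1 else 0) := by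
      intro w hw
      rw [← Finset.card_filter]
      congr 1
      rw [Finset.filter_mem_eq_inter]
      exact (Finset.inter_eq_right.mpr (hsub w hw)).symm
    rw [Finset.sum_congr rfl this, Finset.sum_comm]
    refine Finset.sum_congr rfl fun c _ => ?_
    rw [Finset.card_filter]
  -- upper bound
  have hupper : ∑ w ∈ S, (colors w).card ≤ (K - 1) * m := by
    rw [hsum]
    calc ∑ c ∈ T, (S.filter (fun w => c ∈ colors w)).card
        ≤ ∑ c ∈ T, m := Finset.sum_le_sum fun c _ => hcoll j c
      _ = T.card * m := by rw [Finset.sum_const, smul_eq_mul]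
      _ ≤ (K - 1) * m := by
          apply Nat.mul_le_mul_right
          have hjsub : colors j ⊆ U := fun c hc =>
            Finset.mem_biUnion.mpr ⟨j, Finset.mem_univ _, hc⟩
          rw [hT, Finset.card_sdiff_of_subset hjsub, hK]
          have := (hne j).card_pos
          omega
  -- lower bound
  have hlower : S.card + 1 ≤ ∑ w ∈ S, (colors w).card := by
    rw [← Finset.add_sum_erase S _ hiS]
    have h1 : (S.erase i).card + 1 = S.card := Finset.card_erase_add_one hiS
    have h2 : (S.erase i).card ≤ ∑ w ∈ S.erase i, (colors w).card := by
      calc (S.erase i).card = ∑ w ∈ S.erase i, 1 := by simp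
        _ ≤ _ := Finset.sum_le_sum fun w _ => (hne w).card_pos
    omega
  have hdeg : G.degree j = S.card := rfl
  have hmain : G.degree j + 1 ≤ (K - 1) * m := by rw [hdeg]; omega
  refine ⟨hmain, ?_⟩
  have h3 : (G.degree j / m) * m ≤ G.degree j := Nat.div_mul_le_self _ _
  have h4 : (G.degree j / m) * m < (K - 1) * m := by omega
  have h5 : G.degree j / m < K - 1 := lt_of_mul_lt_mul_right h4 (Nat.zero_le m)
  have hK0 : 0 < K := by
    rcases Nat.eq_zero_or_pos K with h | h
    · rw [h] at h5; exact absurd h5 (Nat.not_lt_zero _)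
    · exact h
  exact lt_of_le_of_lt (Nat.succ_le_of_lt h5) (Nat.sub_lt hK0 one_pos)
end
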